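/- arXiv:1605.01041 — 2 statements merged into one kernel-verified Lean document; each statement's English description precedes it below -/
import Mathlib

section
/- If T_n converges to T in generalised strong resolvent sense, then the essential spectrum of T is contained in the limiting essential spectrum of the sequence (T_n). -/
open Filter Topology

noncomputable section

variable {H₀ : Type} [NormedAddCommGroup H₀] [InnerProductSpace ℂ H₀] [CompleteSpace H₀]

/-- Weak convergence `x n ⇀ x₀` in the Hilbert space `H₀`. -/
def WeakTendsto (x : ℕ → H₀) (x₀ : H₀) : Prop :=
  ∀ y : H₀, Tendsto (fun n => (inner ℂ (x n - x₀) y : ℂ)) atTop (nhds 0)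

/-- `P` is the orthogonal projection of `H₀` onto the subspace `Hsp`. -/
def IsOrthProj (Hsp : Submodule ℂ H₀) (P : H₀ →L[ℂ] H₀) : Prop :=
  ∀ x : H₀, P x ∈ Hsp ∧ x - P x ∈ Hspᗮ

/-- The operator `T` with domain `dom` is densely defined in the subspace `Hsp` and maps its
domain into `Hsp`. -/
def ActsIn (Hsp dom : Submodule ℂ H₀) (T : H₀ →ₗ[ℂ] H₀) : Prop :=
  dom ≤ Hsp ∧ dom.topologicalClosure = Hsp ∧ ∀ x ∈ dom, T x ∈ Hsp

/-- The operator `T` with domain `dom` is closed. -/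
def IsClosedOp (dom : Submodule ℂ H₀) (T : H₀ →ₗ[ℂ] H₀) : Prop :=
  ∀ (x : ℕ → H₀) (u v : H₀), (∀ k, x k ∈ dom) →
    Tendsto x atTop (nhds u) → Tendsto (fun k => T (x k)) atTop (nhds v) →
    u ∈ dom ∧ T u = v

/-- `R` is the resolvent `(T - lam)⁻¹` of the operator `T` acting in `Hsp` with domain `dom`,
extended by `0` on the orthogonal complement of `Hsp`. -/
def InResolvent (Hsp dom : Submodule ℂ H₀) (T : H₀ →ₗ[ℂ] H₀) (lam : ℂ)
    (R : H₀ →L[ℂ] H₀) : Prop :=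
  (∀ y ∈ Hsp, R y ∈ dom ∧ T (R y) - lam • R y = y) ∧
  (∀ x ∈ dom, R (T x - lam • x) = x) ∧
  ∀ y ∈ Hspᗮ, R y = 0

/-- `lam` belongs to the resolvent set `ρ(T)`. -/
def InResolventSet (Hsp dom : Submodule ℂ H₀) (T : H₀ →ₗ[ℂ] H₀) (lam : ℂ) : Prop :=
  ∃ R : H₀ →L[ℂ] H₀, InResolvent Hsp dom T lam R

/-- `lam` belongs to the limiting essential spectrum of the sequence `(Tₙ)`. -/
def LimEssSpectrum (domn : ℕ → Submodule ℂ H₀) (Tn : ℕ → H₀ →ₗ[ℂ] H₀) (lam : ℂ) : Prop :=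
  ∃ (φ : ℕ → ℕ) (x : ℕ → H₀), StrictMono φ ∧ (∀ k, x k ∈ domn (φ k)) ∧
    (∀ k, ‖x k‖ = 1) ∧ WeakTendsto x 0 ∧
    Tendsto (fun k => ‖Tn (φ k) (x k) - lam • x k‖) atTop (nhds 0)

/-- `lam` belongs to the limiting essential `eps`-near spectrum of the sequence `(Tₙ)`. -/
def LimEssNear (domn : ℕ → Submodule ℂ H₀) (Tn : ℕ → H₀ →ₗ[ℂ] H₀) (eps : ℝ) (lam : ℂ) :
    Prop :=
  ∃ (φ : ℕ → ℕ) (x : ℕ → H₀), StrictMono φ ∧ (∀ k, x k ∈ domn (φ k)) ∧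
    (∀ k, ‖x k‖ = 1) ∧ WeakTendsto x 0 ∧
    Tendsto (fun k => ‖Tn (φ k) (x k) - lam • x k‖) atTop (nhds eps)

/-- `lam` belongs to the limiting approximate point spectrum of the sequence `(Tₙ)`. -/
def LimApproxSpectrum (domn : ℕ → Submodule ℂ H₀) (Tn : ℕ → H₀ →ₗ[ℂ] H₀) (lam : ℂ) : Prop :=
  ∃ (φ : ℕ → ℕ) (x : ℕ → H₀), StrictMono φ ∧ (∀ k, x k ∈ domn (φ k)) ∧
    (∀ k, ‖x k‖ = 1) ∧
    Tendsto (fun k => ‖Tn (φ k) (x k) - lam • x k‖) atTop (nhds 0)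

/-- `lam` belongs to the essential spectrum of `T`. -/
def EssSpectrum (dom : Submodule ℂ H₀) (T : H₀ →ₗ[ℂ] H₀) (lam : ℂ) : Prop :=
  ∃ x : ℕ → H₀, (∀ k, x k ∈ dom) ∧ (∀ k, ‖x k‖ = 1) ∧ WeakTendsto x 0 ∧
    Tendsto (fun k => ‖T (x k) - lam • x k‖) atTop (nhds 0)

/-- `lam` belongs to the essential `eps`-near spectrum of `T`. -/
def EssNear (dom : Submodule ℂ H₀) (T : H₀ →ₗ[ℂ] H₀) (eps : ℝ) (lam : ℂ) : Prop :=
  ∃ x : ℕ → H₀, (∀ k, x k ∈ dom) ∧ (∀ k, ‖x k‖ = 1) ∧ WeakTendsto x 0 ∧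
    Tendsto (fun k => ‖T (x k) - lam • x k‖) atTop (nhds eps)

/-- `lam` belongs to the approximate point spectrum of `T`. -/
def ApproxSpectrum (dom : Submodule ℂ H₀) (T : H₀ →ₗ[ℂ] H₀) (lam : ℂ) : Prop :=
  ∃ x : ℕ → H₀, (∀ k, x k ∈ dom) ∧ (∀ k, ‖x k‖ = 1) ∧
    Tendsto (fun k => ‖T (x k) - lam • x k‖) atTop (nhds 0)

/-- `lam` belongs to the point spectrum of `T`. -/
def PointSpectrum (dom : Submodule ℂ H₀) (T : H₀ →ₗ[ℂ] H₀) (lam : ℂ) : Prop :=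
  ∃ x ∈ dom, x ≠ 0 ∧ T x = lam • x

/-- `lam` belongs to the `eps`-approximate point spectrum of `T`. -/
def PseudoAppSpectrum (dom : Submodule ℂ H₀) (T : H₀ →ₗ[ℂ] H₀) (eps : ℝ) (lam : ℂ) : Prop :=
  ∃ x ∈ dom, ‖x‖ = 1 ∧ ‖T x - lam • x‖ < eps

/-- `lam` belongs to the spectrum of `T` acting in `Hsp`. -/
def InSpec (Hsp dom : Submodule ℂ H₀) (T : H₀ →ₗ[ℂ] H₀) (lam : ℂ) : Prop :=
  ¬ InResolventSet Hsp dom T lam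

/-- `lam` belongs to the `eps`-pseudospectrum of `T` acting in `Hsp`
(with the convention `‖(T-lam)⁻¹‖ = ∞` on the spectrum). -/
def InPseudoSpec (Hsp dom : Submodule ℂ H₀) (T : H₀ →ₗ[ℂ] H₀) (eps : ℝ) (lam : ℂ) : Prop :=
  (¬ InResolventSet Hsp dom T lam) ∨
    ∃ R : H₀ →L[ℂ] H₀, InResolvent Hsp dom T lam R ∧ 1 / eps < ‖R‖

/-- Generalised strong resolvent convergence `Tₙ → T`. -/
def GSRConv (Hsp dom : Submodule ℂ H₀) (T : H₀ →ₗ[ℂ] H₀)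
    (Hn domn : ℕ → Submodule ℂ H₀) (Tn : ℕ → H₀ →ₗ[ℂ] H₀) : Prop :=
  ∃ (n₀ : ℕ) (lam₀ : ℂ) (R : H₀ →L[ℂ] H₀) (Rn : ℕ → H₀ →L[ℂ] H₀),
    InResolvent Hsp dom T lam₀ R ∧
    (∀ n, n ≥ n₀ → InResolvent (Hn n) (domn n) (Tn n) lam₀ (Rn n)) ∧
    ∀ y : H₀, Tendsto (fun n => Rn n y) atTop (nhds (R y))

/-- Generalised norm resolvent convergence `Tₙ → T`. -/
def GNRConv (Hsp dom : Submodule ℂ H₀) (T : H₀ →ₗ[ℂ] H₀)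
    (Hn domn : ℕ → Submodule ℂ H₀) (Tn : ℕ → H₀ →ₗ[ℂ] H₀) : Prop :=
  ∃ (n₀ : ℕ) (lam₀ : ℂ) (R : H₀ →L[ℂ] H₀) (Rn : ℕ → H₀ →L[ℂ] H₀),
    InResolvent Hsp dom T lam₀ R ∧
    (∀ n, n ≥ n₀ → InResolvent (Hn n) (domn n) (Tn n) lam₀ (Rn n)) ∧
    Tendsto (fun n => ‖Rn n - R‖) atTop (nhds 0)

/-- The sequence of bounded operators `(Bₙ)`, `Bₙ ∈ L(Hₙ)`, is discretely compact: images of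
bounded sequences `xₙ ∈ Hₙ` have subsequences converging in norm to an element of `Hsp`. -/
def DiscretelyCompact (Hsp : Submodule ℂ H₀) (Hn : ℕ → Submodule ℂ H₀)
    (B : ℕ → H₀ →L[ℂ] H₀) : Prop :=
  ∀ (φ : ℕ → ℕ) (x : ℕ → H₀), StrictMono φ → (∀ k, x k ∈ Hn (φ k)) →
    (∃ C : ℝ, ∀ k, ‖x k‖ ≤ C) →
    ∃ (ψ : ℕ → ℕ) (z : H₀), StrictMono ψ ∧ z ∈ Hsp ∧
      Tendsto (fun k => B (φ (ψ k)) (x (ψ k))) atTop (nhds z)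

/-- `S` with domain `domS` is the Hilbert-space adjoint of the densely defined operator `T`
acting in `Hsp` with domain `dom`. -/
def IsAdjointOp (Hsp dom : Submodule ℂ H₀) (T : H₀ →ₗ[ℂ] H₀)
    (domS : Submodule ℂ H₀) (S : H₀ →ₗ[ℂ] H₀) : Prop :=
  domS ≤ Hsp ∧ ∀ y ∈ Hsp, ∀ z ∈ Hsp,
    ((y ∈ domS ∧ S y = z) ↔ ∀ x ∈ dom, (inner ℂ (T x) y : ℂ) = inner ℂ x z)

/-- The sequence of bounded operators `(Aₙ)` converges strongly. -/
def StrongConvSeq (A : ℕ → H₀ →L[ℂ] H₀) : Prop :=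
  ∃ A₀ : H₀ →L[ℂ] H₀, ∀ y : H₀, Tendsto (fun n => A n y) atTop (nhds (A₀ y))

/-- `lam` belongs to the region of boundedness `Δ_b((Tₙ))`. -/
def InRegionOfBoundedness (Hn domn : ℕ → Submodule ℂ H₀) (Tn : ℕ → H₀ →ₗ[ℂ] H₀)
    (lam : ℂ) : Prop :=
  ∃ (n₀ : ℕ) (C : ℝ) (Rn : ℕ → H₀ →L[ℂ] H₀),
    ∀ n, n ≥ n₀ → InResolvent (Hn n) (domn n) (Tn n) lam (Rn n) ∧ ‖Rn n‖ ≤ C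

/-!
Let `x k` be a Weyl sequence for `T` at `lam`, and put `y k = (T - lam₀) x k`, so that
`R y k = x k` for the limit resolvent `R`. Strong convergence `Rₙ → R` and `Pₙ → P` lets one pick,
diagonally, indices `φ k` for which `z k = R_{φ k} y k` is close to `x k` and
`(T_{φ k} - lam₀) z k = P_{φ k} y k` is close to `y k`. Then `(T_{φ k} - lam) z k → 0`, and the
normalised `z k` form a limiting Weyl sequence for `(Tₙ)` at `lam`.
-/

theorem exists_strictMono_ge_tendsto_diagonal {E : Type*} [SeminormedAddCommGroup E]
    {f : ℕ → ℕ → E} {g : ℕ → E} (hf : ∀ k, Tendsto (f k) atTop (𝓝 (g k))) (n₀ : ℕ) :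
    ∃ φ : ℕ → ℕ, StrictMono φ ∧ (∀ k, n₀ ≤ φ k) ∧
      Tendsto (fun k => f k (φ k) - g k) atTop (𝓝 0) := by
  have hev : ∀ k : ℕ, ∀ᶠ n in atTop, n₀ ≤ n ∧ ‖f k n - g k‖ < 1 / ((k : ℝ) + 1) := fun k =>
    (eventually_ge_atTop n₀).and <|
      (tendsto_iff_norm_sub_tendsto_zero.1 (hf k)).eventually (gt_mem_nhds (by positivity))
  obtain ⟨φ, hφ, hφk⟩ := extraction_forall_of_eventually hev
  refine ⟨φ, hφ, fun k => (hφk k).1, tendsto_zero_iff_norm_tendsto_zero.2 ?_⟩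
  exact squeeze_zero (fun _ => norm_nonneg _) (fun k => (hφk k).2.le)
    tendsto_one_div_add_atTop_nhds_zero_nat

section

omit [CompleteSpace H₀]

theorem IsOrthProj.apply_eq_self {Hsp : Submodule ℂ H₀} {P : H₀ →L[ℂ] H₀}
    (hP : IsOrthProj Hsp P) {y : H₀} (hy : y ∈ Hsp) : P y = y := by
  have hmem : y - P y ∈ Hsp ⊓ Hspᗮ := ⟨Hsp.sub_mem hy (hP y).1, (hP y).2⟩
  rw [Hsp.inf_orthogonal_eq_bot, Submodule.mem_bot, sub_eq_zero] at hmem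
  exact hmem.symm

theorem InResolvent.mem_dom_and_sub_smul_eq {Hsp dom : Submodule ℂ H₀} {T : H₀ →ₗ[ℂ] H₀}
    {μ : ℂ} {R P : H₀ →L[ℂ] H₀} (hR : InResolvent Hsp dom T μ R) (hP : IsOrthProj Hsp P)
    (w : H₀) : R w ∈ dom ∧ T (R w) - μ • R w = P w := by
  have hRP : R w = R (P w) := by
    rw [← sub_eq_zero, ← map_sub]
    exact hR.2.2 _ (hP w).2
  rw [hRP]
  exact hR.1 _ (hP w).1

theorem ActsIn.sub_smul_mem {Hsp dom : Submodule ℂ H₀} {T : H₀ →ₗ[ℂ] H₀}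
    (hT : ActsIn Hsp dom T) {x : H₀} (hx : x ∈ dom) (μ : ℂ) : T x - μ • x ∈ Hsp :=
  Hsp.sub_mem (hT.2.2 x hx) (Hsp.smul_mem μ (hT.1 hx))

theorem WeakTendsto.of_tendsto_norm_sub {x z : ℕ → H₀} (hx : WeakTendsto x 0)
    (hzx : Tendsto (fun k => ‖z k - x k‖) atTop (𝓝 0)) : WeakTendsto z 0 := by
  intro w
  have hsmall : Tendsto (fun k => (inner ℂ (z k - x k) w : ℂ)) atTop (𝓝 0) :=
    tendsto_zero_iff_norm_tendsto_zero.2 <| squeeze_zero (fun _ => norm_nonneg _)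
      (fun _ => norm_inner_le_norm _ _) (by simpa using hzx.mul_const ‖w‖)
  simpa [← inner_add_left] using (hx w).add hsmall

theorem WeakTendsto.smul {x : ℕ → H₀} (hx : WeakTendsto x 0) {c : ℕ → ℂ} {c₀ : ℂ}
    (hc : Tendsto c atTop (𝓝 c₀)) : WeakTendsto (fun k => c k • x k) 0 := by
  intro w
  have hconj := (Complex.continuous_conj.tendsto c₀).comp hc
  simpa [inner_smul_left] using (hx w).mul hconj

theorem WeakTendsto.comp_add {x : ℕ → H₀} (hx : WeakTendsto x 0) (N : ℕ) :
    WeakTendsto (fun k => x (k + N)) 0 :=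
  fun w => (tendsto_add_atTop_iff_nat N).2 (hx w)

/-- The finitely many `k` with `z k = 0` are skipped by shifting the index. -/
theorem limEssSpectrum_of_tendsto_norm {domn : ℕ → Submodule ℂ H₀} {Tn : ℕ → H₀ →ₗ[ℂ] H₀}
    {lam : ℂ} {φ : ℕ → ℕ} {z : ℕ → H₀} (hφ : StrictMono φ) (hz : ∀ k, z k ∈ domn (φ k))
    (hnorm : Tendsto (fun k => ‖z k‖) atTop (𝓝 1)) (hweak : WeakTendsto z 0)
    (hsing : Tendsto (fun k => ‖Tn (φ k) (z k) - lam • z k‖) atTop (𝓝 0)) :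
    LimEssSpectrum domn Tn lam := by
  obtain ⟨N, hN⟩ := eventually_atTop.1 (hnorm.eventually (lt_mem_nhds one_pos))
  have hpos : ∀ k, 0 < ‖z (k + N)‖ := fun k => hN _ (Nat.le_add_left N k)
  have hinv : Tendsto (fun k => ‖z (k + N)‖⁻¹) atTop (𝓝 1) := by
    simpa using ((tendsto_add_atTop_iff_nat N).2 hnorm).inv₀ one_ne_zero
  set c : ℕ → ℂ := fun k => ((‖z (k + N)‖⁻¹ : ℝ) : ℂ)
  have hc : ∀ k, ‖c k‖ = ‖z (k + N)‖⁻¹ := fun k => by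
    simp [c, Complex.norm_real]
  have hcT : ∀ k, ‖Tn (φ (k + N)) (c k • z (k + N)) - lam • c k • z (k + N)‖
      = ‖z (k + N)‖⁻¹ * ‖Tn (φ (k + N)) (z (k + N)) - lam • z (k + N)‖ := fun k => by
    rw [map_smul, smul_comm lam, ← smul_sub, norm_smul, hc]
  refine ⟨fun k => φ (k + N), fun k => c k • z (k + N), hφ.comp (strictMono_id.add_const N),
    fun k => (domn _).smul_mem _ (hz _), fun k => ?_, ?_, ?_⟩
  · rw [norm_smul, hc, inv_mul_cancel₀ (hpos k).ne']
  · simpa [c] using (hweak.comp_add N).smul ((Complex.continuous_ofReal.tendsto 1).comp hinv)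
  · have hlim := hinv.mul ((tendsto_add_atTop_iff_nat N).2 hsing)
    rw [mul_zero] at hlim
    exact hlim.congr fun k => (hcT k).symm

end

theorem stmt2_general
    (Hsp dom : Submodule ℂ H₀) (T : H₀ →ₗ[ℂ] H₀)
    (hT : ActsIn Hsp dom T)
    (Hn domn : ℕ → Submodule ℂ H₀) (Tn : ℕ → H₀ →ₗ[ℂ] H₀)
    (P : H₀ →L[ℂ] H₀) (Pn : ℕ → H₀ →L[ℂ] H₀)
    (hP : IsOrthProj Hsp P) (hPn : ∀ n, IsOrthProj (Hn n) (Pn n))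
    (hPconv : ∀ y : H₀, Tendsto (fun n => Pn n y) atTop (nhds (P y)))
    (hconv : GSRConv Hsp dom T Hn domn Tn) (lam : ℂ)
    (hlam : EssSpectrum dom T lam) :
    LimEssSpectrum domn Tn lam := by
  obtain ⟨n₀, lam₀, R, Rn, hR, hRn, hRconv⟩ := hconv
  obtain ⟨x, hxdom, hxnorm, hxweak, hxsing⟩ := hlam
  set y : ℕ → H₀ := fun k => T (x k) - lam₀ • x k
  have hconvk : ∀ k, Tendsto (fun n => (Rn n (y k), Pn n (y k))) atTop (𝓝 (x k, y k)) :=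
    fun k => by
      have hRy : R (y k) = x k := hR.2.1 _ (hxdom k)
      have hPy : P (y k) = y k := hP.apply_eq_self (hT.sub_smul_mem (hxdom k) lam₀)
      simpa only [hRy, hPy] using (hRconv (y k)).prodMk_nhds (hPconv (y k))
  obtain ⟨φ, hφ, hφn₀, hdiag⟩ := exists_strictMono_ge_tendsto_diagonal hconvk n₀
  set z : ℕ → H₀ := fun k => Rn (φ k) (y k)
  have hz k := (hRn (φ k) (hφn₀ k)).mem_dom_and_sub_smul_eq (hPn (φ k)) (y k)
  have hzx : Tendsto (fun k => z k - x k) atTop (𝓝 0) := by simpa using hdiag.fst_nhds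
  have hPy : Tendsto (fun k => Pn (φ k) (y k) - y k) atTop (𝓝 0) := by
    simpa using hdiag.snd_nhds
  -- `(T_{φ k} - lam) z k = (P_{φ k} y k - y k) + (lam₀ - lam) (z k - x k) + (T - lam) x k`
  have hsing : Tendsto (fun k => Tn (φ k) (z k) - lam • z k) atTop (𝓝 0) := by
    have hsum := (hPy.add (hzx.const_smul (lam₀ - lam))).add
      (tendsto_zero_iff_norm_tendsto_zero.2 hxsing)
    simp only [add_zero, smul_zero] at hsum
    refine hsum.congr fun k => ?_
    rw [← (hz k).2]
    module
  have hznorm : Tendsto (fun k => ‖z k‖) atTop (𝓝 1) := by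
    refine tendsto_iff_norm_sub_tendsto_zero.2 <| squeeze_zero (fun _ => norm_nonneg _)
      (fun k => ?_) (by simpa using hzx.norm)
    rw [← hxnorm k]
    exact abs_norm_sub_norm_le _ _
  exact limEssSpectrum_of_tendsto_norm hφ (fun k => (hz k).1) hznorm
    (hxweak.of_tendsto_norm_sub (by simpa using hzx.norm)) (by simpa using hsing.norm)

theorem stmt2 [TopologicalSpace.SeparableSpace H₀]
    (Hsp dom : Submodule ℂ H₀) (T : H₀ →ₗ[ℂ] H₀)
    (hHcl : IsClosed ((Hsp : Set H₀)))
    (hT : ActsIn Hsp dom T) (hTcl : IsClosedOp dom T)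
    (Hn domn : ℕ → Submodule ℂ H₀) (Tn : ℕ → H₀ →ₗ[ℂ] H₀)
    (hHncl : ∀ n, IsClosed ((Hn n : Set H₀)))
    (hTn : ∀ n, ActsIn (Hn n) (domn n) (Tn n))
    (hTncl : ∀ n, IsClosedOp (domn n) (Tn n))
    (P : H₀ →L[ℂ] H₀) (Pn : ℕ → H₀ →L[ℂ] H₀)
    (hP : IsOrthProj Hsp P) (hPn : ∀ n, IsOrthProj (Hn n) (Pn n))
    (hPconv : ∀ y : H₀, Tendsto (fun n => Pn n y) atTop (nhds (P y)))
    (hconv : GSRConv Hsp dom T Hn domn Tn) (lam : ℂ)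
    (hlam : EssSpectrum dom T lam) :
    LimEssSpectrum domn Tn lam :=
  stmt2_general Hsp dom T hT Hn domn Tn P Pn hP hPn hPconv hconv lam hlam

end
end

section
/- If T_n → T and T_n* → T* in generalised strong resolvent sense, then the limiting approximate point spectrum of (T_n) equals the union of the limiting essential spectrum of (T_n) and the point spectrum of T. -/
open Filter Topology

noncomputable section

variable {H₀ : Type} [NormedAddCommGroup H₀] [InnerProductSpace ℂ H₀] [CompleteSpace H₀]

/-!
Take unit vectors `xₖ ∈ dom(T_{φ k})` with `‖(T_{φ k} - λ) xₖ‖ → 0`. By sequential Banach–Alaoglu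
a subsequence converges weakly to some `x₀`. If `x₀ = 0`, `λ` is in the limiting essential
spectrum. Otherwise `x₀ ∈ H` (test against `Pₙ u → P u`), and `x₀ ⊥ ran(T* - conj λ)`: every
`y ∈ dom(T*)` is the limit of `yₙ ∈ dom(Tₙ*)` with `Tₙ* yₙ → T* y` (the generalised strong
resolvent convergence `Tₙ* → T*`), and `⟨(Tₙ - λ) xₖ, yₙ⟩ = ⟨xₖ, (Tₙ* - conj λ) yₙ⟩`.
Applied to `y = R(μ)* w` this gives `x₀ = (λ - μ) R(μ) x₀`, so `x₀` is an eigenvector of `T`.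
Conversely an eigenvector `v` of `T` is the limit of `Rₙ(μ)(T - μ) v`, whose normalisations are
approximate eigenvectors of `Tₙ`.
-/

open ComplexConjugate

section

variable {E : Type} [NormedAddCommGroup E] [InnerProductSpace ℂ E]

theorem exists_strictMono_weakTendsto [CompleteSpace E] [TopologicalSpace.SeparableSpace E]
    {x : ℕ → E} {C : ℝ} (hC : ∀ k, ‖x k‖ ≤ C) :
    ∃ (ψ : ℕ → ℕ) (x₀ : E), StrictMono ψ ∧ WeakTendsto (fun k => x (ψ k)) x₀ := by
  let f : ℕ → WeakDual ℂ E :=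
    fun k => StrongDual.toWeakDual (InnerProductSpace.toDual ℂ E (x k))
  have hf : ∀ k, f k ∈ WeakDual.toStrongDual ⁻¹' Metric.closedBall 0 C := fun k => by
    simpa [f] using hC k
  obtain ⟨g, -, ψ, hψ, hg⟩ := WeakDual.isSeqCompact_closedBall ℂ E 0 C hf
  refine ⟨ψ, (InnerProductSpace.toDual ℂ E).symm (WeakDual.toStrongDual g), hψ, fun y => ?_⟩
  have hgy : Tendsto (fun k => f (ψ k) y) atTop (𝓝 (g y)) :=
    ((WeakDual.eval_continuous y).tendsto g).comp hg
  simpa [f, inner_sub_left, InnerProductSpace.toDual_symm_apply] using hgy.sub_const (g y)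

theorem WeakTendsto.tendsto_inner {x : ℕ → E} {x₀ : E} (hx : WeakTendsto x x₀) {C : ℝ}
    (hC : ∀ k, ‖x k‖ ≤ C) {z : ℕ → E} {z₀ : E} (hz : Tendsto z atTop (𝓝 z₀)) :
    Tendsto (fun k => inner ℂ (x k) (z k)) atTop (𝓝 (inner ℂ x₀ z₀)) := by
  have hfix : Tendsto (fun k => inner ℂ (x k) z₀) atTop (𝓝 (inner ℂ x₀ z₀)) := by
    simpa [inner_sub_left] using (hx z₀).add_const (inner ℂ x₀ z₀)
  have hmove : Tendsto (fun k => inner ℂ (x k) (z k - z₀)) atTop (𝓝 0) := by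
    refine squeeze_zero_norm (fun k => (norm_inner_le_norm _ _).trans
      (mul_le_mul_of_nonneg_right (hC k) (norm_nonneg _))) ?_
    simpa using (tendsto_iff_norm_sub_tendsto_zero.mp hz).const_mul C
  simpa [inner_sub_right] using hfix.add hmove

namespace IsOrthProj

variable {K : Submodule ℂ E} {P : E →L[ℂ] E}

theorem apply_eq_self_s11 (hP : IsOrthProj K P) {x : E} (hx : x ∈ K) : P x = x := by
  have h := Submodule.inner_right_of_mem_orthogonal (K.sub_mem hx (hP x).1) (hP x).2
  rw [inner_self_eq_zero, sub_eq_zero] at h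
  exact h.symm

theorem apply_eq_zero (hP : IsOrthProj K P) {u : E} (hu : u ∈ Kᗮ) : P u = 0 := by
  have hmem : P u ∈ Kᗮ := by simpa using Kᗮ.sub_mem hu (hP u).2
  exact inner_self_eq_zero.mp (Submodule.inner_right_of_mem_orthogonal (hP u).1 hmem)

theorem inner_apply_right (hP : IsOrthProj K P) {v : E} (hv : v ∈ K) (u : E) :
    inner ℂ v (P u) = inner ℂ v u := by
  have h := Submodule.inner_right_of_mem_orthogonal hv (hP u).2
  rwa [inner_sub_right, sub_eq_zero, eq_comm] at h

end IsOrthProj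

theorem WeakTendsto.mem_of_orthProj_tendsto [CompleteSpace E] {K : Submodule ℂ E}
    (hK : IsClosed (K : Set E)) {Kn : ℕ → Submodule ℂ E} {P : E →L[ℂ] E} {Pn : ℕ → E →L[ℂ] E}
    (hP : IsOrthProj K P) (hPn : ∀ n, IsOrthProj (Kn n) (Pn n))
    (hPconv : ∀ y, Tendsto (fun n => Pn n y) atTop (𝓝 (P y)))
    {φ : ℕ → ℕ} (hφ : Tendsto φ atTop atTop) {x : ℕ → E} (hxK : ∀ k, x k ∈ Kn (φ k))
    {C : ℝ} (hC : ∀ k, ‖x k‖ ≤ C) {x₀ : E} (hx : WeakTendsto x x₀) : x₀ ∈ K := by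
  rw [← hK.submodule_topologicalClosure_eq, ← Submodule.orthogonal_orthogonal_eq_closure]
  intro u hu
  refine inner_eq_zero_symm.mp ?_
  have hPu : Tendsto (fun k => inner ℂ (x k) (Pn (φ k) u)) atTop (𝓝 (inner ℂ x₀ (P u))) :=
    hx.tendsto_inner hC ((hPconv u).comp hφ)
  simp only [(hPn _).inner_apply_right (hxK _), hP.apply_eq_zero hu, inner_zero_right] at hPu
  exact tendsto_nhds_unique (hx.tendsto_inner hC tendsto_const_nhds) hPu

namespace InResolvent

variable {K dom : Submodule ℂ E} {T : E →ₗ[ℂ] E} {μ : ℂ} {R P : E →L[ℂ] E}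

theorem apply_orthProj (hR : InResolvent K dom T μ R) (hP : IsOrthProj K P) (y : E) :
    R (P y) = R y := by
  rw [← sub_eq_zero, ← map_sub, ← neg_sub, map_neg, hR.2.2 _ (hP y).2, neg_zero]

theorem apply_mem (hR : InResolvent K dom T μ R) (hP : IsOrthProj K P) (y : E) : R y ∈ dom := by
  simpa only [hR.apply_orthProj hP] using (hR.1 (P y) (hP y).1).1

theorem apply_apply (hR : InResolvent K dom T μ R) (hP : IsOrthProj K P) (y : E) :
    T (R y) = P y + μ • R y := by
  rw [← sub_eq_iff_eq_add, ← hR.apply_orthProj hP]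
  exact (hR.1 (P y) (hP y).1).2

end InResolvent

theorem GSRConv.exists_tendsto_graph {K dom : Submodule ℂ E} {A : E →ₗ[ℂ] E}
    {Kn domn : ℕ → Submodule ℂ E} {An : ℕ → E →ₗ[ℂ] E} {P : E →L[ℂ] E} {Pn : ℕ → E →L[ℂ] E}
    (hconv : GSRConv K dom A Kn domn An) (hP : IsOrthProj K P)
    (hPn : ∀ n, IsOrthProj (Kn n) (Pn n)) (hPconv : ∀ y, Tendsto (fun n => Pn n y) atTop (𝓝 (P y)))
    (hdom : dom ≤ K) (hdomn : ∀ n, domn n ≤ Kn n) {y : E} (hy : y ∈ dom) (hAy : A y ∈ K) :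
    ∃ yn : ℕ → E, (∀ᶠ n in atTop, yn n ∈ domn n ∧ An n (yn n) ∈ Kn n) ∧
      Tendsto yn atTop (𝓝 y) ∧ Tendsto (fun n => An n (yn n)) atTop (𝓝 (A y)) := by
  obtain ⟨n₀, μ, R, Rn, hR, hRn, hRconv⟩ := hconv
  have hRy : R (A y - μ • y) = y := hR.2.1 y hy
  have hPy : P (A y - μ • y) = A y - μ • y :=
    hP.apply_eq_self_s11 (K.sub_mem hAy (K.smul_mem μ (hdom hy)))
  refine ⟨fun n => Rn n (A y - μ • y), ?_, by simpa [hRy] using hRconv (A y - μ • y), ?_⟩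
  · filter_upwards [eventually_ge_atTop n₀] with n hn
    have hmem := (hRn n hn).apply_mem (hPn n) (A y - μ • y)
    refine ⟨hmem, ?_⟩
    rw [(hRn n hn).apply_apply (hPn n)]
    exact (Kn n).add_mem (hPn n _).1 ((Kn n).smul_mem μ (hdomn n hmem))
  · have hlim := (hPconv (A y - μ • y)).add ((hRconv (A y - μ • y)).const_smul μ)
    rw [hPy, hRy, sub_add_cancel] at hlim
    refine hlim.congr' ?_
    filter_upwards [eventually_ge_atTop n₀] with n hn
    exact ((hRn n hn).apply_apply (hPn n) _).symm

theorem IsAdjointOp.inner_apply {K dom domS : Submodule ℂ E} {T S : E →ₗ[ℂ] E}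
    (hadj : IsAdjointOp K dom T domS S) {x y : E} (hx : x ∈ dom) (hy : y ∈ domS) (hSy : S y ∈ K) :
    inner ℂ (T x) y = inner ℂ x (S y) :=
  (hadj.2 y (hadj.1 hy) (S y) hSy).mp ⟨hy, rfl⟩ x hx

theorem IsAdjointOp.adjoint_resolvent [CompleteSpace E] {K dom domS : Submodule ℂ E}
    {T S : E →ₗ[ℂ] E} (hadj : IsAdjointOp K dom T domS S) (hK : IsClosed (K : Set E)) {μ : ℂ}
    {R : E →L[ℂ] E} (hR : InResolvent K dom T μ R) {w : E} (hw : w ∈ K) :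
    R.adjoint w ∈ domS ∧ S (R.adjoint w) = w + conj μ • R.adjoint w := by
  have hmem : R.adjoint w ∈ K := by
    rw [← hK.submodule_topologicalClosure_eq, ← Submodule.orthogonal_orthogonal_eq_closure]
    intro u hu
    rw [← inner_conj_symm, ContinuousLinearMap.adjoint_inner_left, hR.2.2 u hu, inner_zero_right,
      map_zero]
  refine (hadj.2 _ hmem _ (K.add_mem hw (K.smul_mem _ hmem))).mpr fun x hx => ?_
  have hRT : R (T x) = x + μ • R x := by
    rw [← sub_eq_iff_eq_add, ← map_smul, ← map_sub]
    exact hR.2.1 x hx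
  rw [ContinuousLinearMap.adjoint_inner_right, hRT, inner_add_left, inner_smul_left,
    inner_add_right, inner_smul_right, ContinuousLinearMap.adjoint_inner_right]

theorem IsAdjointOp.mem_dom_and_apply_eq_of_orthogonal [CompleteSpace E]
    {K dom domS : Submodule ℂ E} {T S : E →ₗ[ℂ] E} (hadj : IsAdjointOp K dom T domS S)
    (hK : IsClosed (K : Set E)) (hdom : dom ≤ K) {μ : ℂ} {R : E →L[ℂ] E}
    (hR : InResolvent K dom T μ R) {lam : ℂ} {x : E} (hx : x ∈ K)
    (horth : ∀ y ∈ domS, S y ∈ K → inner ℂ x (S y - conj lam • y) = 0) :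
    x ∈ dom ∧ T x = lam • x := by
  have hfix : x = R ((lam - μ) • x) := by
    have hperp : ∀ w ∈ K, inner ℂ (x - R ((lam - μ) • x)) w = 0 := by
      intro w hw
      obtain ⟨hy, hSy⟩ := hadj.adjoint_resolvent hK hR hw
      have h := horth _ hy (hSy ▸ K.add_mem hw (K.smul_mem _ (hadj.1 hy)))
      rw [hSy, inner_sub_right, inner_add_right, inner_smul_right, inner_smul_right] at h
      rw [inner_sub_left, ← ContinuousLinearMap.adjoint_inner_right, inner_smul_left, map_sub]
      linear_combination h
    have hdiff : x - R ((lam - μ) • x) ∈ K :=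
      K.sub_mem hx (hdom (hR.1 _ (K.smul_mem _ hx)).1)
    exact (sub_eq_zero.mp (inner_self_eq_zero.mp (hperp _ hdiff)))
  obtain ⟨hmem, heq⟩ := hR.1 _ (K.smul_mem (lam - μ) hx)
  rw [← hfix] at hmem heq
  refine ⟨hmem, ?_⟩
  rw [sub_eq_iff_eq_add, ← add_smul, sub_add_cancel] at heq
  exact heq

theorem WeakTendsto.inner_adjoint_sub_smul_eq_zero {K domS : Submodule ℂ E} {S : E →ₗ[ℂ] E}
    {Kn domn domSn : ℕ → Submodule ℂ E} {Tn Sn : ℕ → E →ₗ[ℂ] E} {P : E →L[ℂ] E}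
    {Pn : ℕ → E →L[ℂ] E} (hconvadj : GSRConv K domS S Kn domSn Sn) (hP : IsOrthProj K P)
    (hPn : ∀ n, IsOrthProj (Kn n) (Pn n)) (hPconv : ∀ y, Tendsto (fun n => Pn n y) atTop (𝓝 (P y)))
    (hdomS : domS ≤ K) (hadjn : ∀ n, IsAdjointOp (Kn n) (domn n) (Tn n) (domSn n) (Sn n))
    {φ : ℕ → ℕ} (hφ : Tendsto φ atTop atTop) {x : ℕ → E} (hxdom : ∀ k, x k ∈ domn (φ k))
    {C : ℝ} (hC : ∀ k, ‖x k‖ ≤ C) {x₀ : E} (hx : WeakTendsto x x₀) {lam : ℂ}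
    (hres : Tendsto (fun k => Tn (φ k) (x k) - lam • x k) atTop (𝓝 0))
    {y : E} (hy : y ∈ domS) (hSy : S y ∈ K) :
    inner ℂ x₀ (S y - conj lam • y) = 0 := by
  obtain ⟨yn, hyn, hynlim, hSynlim⟩ :=
    hconvadj.exists_tendsto_graph hP hPn hPconv hdomS (fun n => (hadjn n).1) hy hSy
  have hleft :
      Tendsto (fun k => inner ℂ (Tn (φ k) (x k) - lam • x k) (yn (φ k))) atTop (𝓝 0) := by
    simpa only [inner_zero_left, Function.comp_apply] using hres.inner (𝕜 := ℂ) (hynlim.comp hφ)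
  have hright : Tendsto (fun k => inner ℂ (x k) (Sn (φ k) (yn (φ k)) - conj lam • yn (φ k)))
      atTop (𝓝 (inner ℂ x₀ (S y - conj lam • y))) :=
    hx.tendsto_inner hC ((hSynlim.comp hφ).sub ((hynlim.comp hφ).const_smul _))
  refine (tendsto_nhds_unique (hleft.congr' ?_) hright).symm
  filter_upwards [hφ.eventually hyn] with k ⟨hyk, hSyk⟩
  rw [inner_sub_left, inner_smul_left, inner_sub_right, inner_smul_right,
    (hadjn (φ k)).inner_apply (hxdom k) hyk hSyk]

theorem limApproxSpectrum_of_tendsto {domn : ℕ → Submodule ℂ E} {Tn : ℕ → E →ₗ[ℂ] E} {lam : ℂ}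
    {xn : ℕ → E} {v : E} (hv : v ≠ 0) (hdom : ∀ᶠ n in atTop, xn n ∈ domn n)
    (hxn : Tendsto xn atTop (𝓝 v))
    (hres : Tendsto (fun n => Tn n (xn n) - lam • xn n) atTop (𝓝 0)) :
    LimApproxSpectrum domn Tn lam := by
  obtain ⟨N, hN⟩ := eventually_atTop.mp (hdom.and (hxn.eventually_ne hv))
  have hshift : Tendsto (fun k => k + N) atTop atTop := tendsto_add_atTop_nat N
  have hlim : Tendsto (fun k => ‖xn (k + N)‖⁻¹ * ‖Tn (k + N) (xn (k + N)) - lam • xn (k + N)‖)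
      atTop (𝓝 (‖v‖⁻¹ * 0)) :=
    ((hxn.norm.comp hshift).inv₀ (norm_ne_zero_iff.mpr hv)).mul
      ((tendsto_zero_iff_norm_tendsto_zero.mp hres).comp hshift)
  rw [mul_zero] at hlim
  refine ⟨fun k => k + N, fun k => (‖xn (k + N)‖ : ℂ)⁻¹ • xn (k + N), strictMono_id.add_const N,
    fun k => (domn _).smul_mem _ (hN (k + N) (Nat.le_add_left N k)).1,
    fun k => norm_smul_inv_norm (hN (k + N) (Nat.le_add_left N k)).2, hlim.congr fun k => ?_⟩
  rw [map_smul, smul_comm, ← smul_sub, norm_smul, norm_inv, Complex.norm_real, norm_norm]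

theorem LimEssSpectrum.limApproxSpectrum {domn : ℕ → Submodule ℂ E} {Tn : ℕ → E →ₗ[ℂ] E}
    {lam : ℂ} (h : LimEssSpectrum domn Tn lam) : LimApproxSpectrum domn Tn lam :=
  let ⟨φ, x, hφ, hdom, hnorm, _, hres⟩ := h
  ⟨φ, x, hφ, hdom, hnorm, hres⟩

theorem PointSpectrum.limApproxSpectrum {K dom : Submodule ℂ E} {T : E →ₗ[ℂ] E}
    {Kn domn : ℕ → Submodule ℂ E} {Tn : ℕ → E →ₗ[ℂ] E} {P : E →L[ℂ] E} {Pn : ℕ → E →L[ℂ] E}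
    (hconv : GSRConv K dom T Kn domn Tn) (hP : IsOrthProj K P)
    (hPn : ∀ n, IsOrthProj (Kn n) (Pn n)) (hPconv : ∀ y, Tendsto (fun n => Pn n y) atTop (𝓝 (P y)))
    (hdom : dom ≤ K) (hdomn : ∀ n, domn n ≤ Kn n) {lam : ℂ} (h : PointSpectrum dom T lam) :
    LimApproxSpectrum domn Tn lam := by
  obtain ⟨v, hv, hv0, hTv⟩ := h
  obtain ⟨xn, hxn, hxnlim, hTxnlim⟩ := hconv.exists_tendsto_graph hP hPn hPconv hdom hdomn hv
    (hTv ▸ K.smul_mem lam (hdom hv))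
  refine limApproxSpectrum_of_tendsto hv0 (hxn.mono fun n h => h.1) hxnlim ?_
  simpa [hTv] using hTxnlim.sub (hxnlim.const_smul lam)

theorem LimApproxSpectrum.limEssSpectrum_or_pointSpectrum [CompleteSpace E]
    [TopologicalSpace.SeparableSpace E] {K dom domS : Submodule ℂ E} {T S : E →ₗ[ℂ] E}
    {Kn domn domSn : ℕ → Submodule ℂ E} {Tn Sn : ℕ → E →ₗ[ℂ] E} {P : E →L[ℂ] E}
    {Pn : ℕ → E →L[ℂ] E} (hK : IsClosed (K : Set E)) (hdom : dom ≤ K)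
    (hdomn : ∀ n, domn n ≤ Kn n) (hP : IsOrthProj K P) (hPn : ∀ n, IsOrthProj (Kn n) (Pn n))
    (hPconv : ∀ y, Tendsto (fun n => Pn n y) atTop (𝓝 (P y)))
    (hadj : IsAdjointOp K dom T domS S)
    (hadjn : ∀ n, IsAdjointOp (Kn n) (domn n) (Tn n) (domSn n) (Sn n)) {μ : ℂ} {R : E →L[ℂ] E}
    (hR : InResolvent K dom T μ R) (hconvadj : GSRConv K domS S Kn domSn Sn) {lam : ℂ}
    (h : LimApproxSpectrum domn Tn lam) : LimEssSpectrum domn Tn lam ∨ PointSpectrum dom T lam := by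
  obtain ⟨φ, x, hφ, hxdom, hxnorm, hres⟩ := h
  obtain ⟨ψ, x₀, hψ, hweak⟩ := exists_strictMono_weakTendsto fun k => (hxnorm k).le
  rcases eq_or_ne x₀ 0 with rfl | hx₀
  · exact .inl ⟨φ ∘ ψ, x ∘ ψ, hφ.comp hψ, fun k => hxdom _, fun k => hxnorm _, hweak,
      hres.comp hψ.tendsto_atTop⟩
  have hφψ : Tendsto (φ ∘ ψ) atTop atTop := (hφ.comp hψ).tendsto_atTop
  have hC : ∀ k, ‖x (ψ k)‖ ≤ 1 := fun k => (hxnorm _).le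
  have hmem : x₀ ∈ K :=
    hweak.mem_of_orthProj_tendsto hK hP hPn hPconv hφψ (fun k => hdomn _ (hxdom _)) hC
  have hres' : Tendsto (fun k => Tn (φ (ψ k)) (x (ψ k)) - lam • x (ψ k)) atTop (𝓝 0) :=
    tendsto_zero_iff_norm_tendsto_zero.mpr (hres.comp hψ.tendsto_atTop)
  obtain ⟨hx₀dom, hTx₀⟩ := hadj.mem_dom_and_apply_eq_of_orthogonal hK hdom hR hmem
    fun y hy hSy => hweak.inner_adjoint_sub_smul_eq_zero hconvadj hP hPn hPconv hadj.1 hadjn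
      hφψ (fun k => hxdom _) hC hres' hy hSy
  exact .inr ⟨x₀, hx₀dom, hx₀, hTx₀⟩

end

theorem stmt11_general [TopologicalSpace.SeparableSpace H₀]
    (Hsp dom : Submodule ℂ H₀) (T : H₀ →ₗ[ℂ] H₀)
    (hHcl : IsClosed ((Hsp : Set H₀)))
    (hT : ActsIn Hsp dom T)
    (Hn domn : ℕ → Submodule ℂ H₀) (Tn : ℕ → H₀ →ₗ[ℂ] H₀)
    (hTn : ∀ n, ActsIn (Hn n) (domn n) (Tn n))
    (P : H₀ →L[ℂ] H₀) (Pn : ℕ → H₀ →L[ℂ] H₀)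
    (hP : IsOrthProj Hsp P) (hPn : ∀ n, IsOrthProj (Hn n) (Pn n))
    (hPconv : ∀ y : H₀, Tendsto (fun n => Pn n y) atTop (nhds (P y)))
    (domS : Submodule ℂ H₀) (S : H₀ →ₗ[ℂ] H₀)
    (domSn : ℕ → Submodule ℂ H₀) (Sn : ℕ → H₀ →ₗ[ℂ] H₀)
    (hadjT : IsAdjointOp Hsp dom T domS S)
    (hadjn : ∀ n, IsAdjointOp (Hn n) (domn n) (Tn n) (domSn n) (Sn n))
    (hconv : GSRConv Hsp dom T Hn domn Tn)
    (hconvadj : GSRConv Hsp domS S Hn domSn Sn) :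
    {lam : ℂ | LimApproxSpectrum domn Tn lam}
      = {lam : ℂ | LimEssSpectrum domn Tn lam} ∪ {lam : ℂ | PointSpectrum dom T lam} := by
  have hdomn : ∀ n, domn n ≤ Hn n := fun n => (hTn n).1
  ext lam
  constructor
  · obtain ⟨-, μ, R, -, hR, -⟩ := hconv
    exact fun h => h.limEssSpectrum_or_pointSpectrum hHcl hT.1 hdomn hP hPn hPconv hadjT hadjn hR
      hconvadj
  · rintro (h | h)
    · exact LimEssSpectrum.limApproxSpectrum h
    · exact PointSpectrum.limApproxSpectrum hconv hP hPn hPconv hT.1 hdomn h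

theorem stmt11 [TopologicalSpace.SeparableSpace H₀]
    (Hsp dom : Submodule ℂ H₀) (T : H₀ →ₗ[ℂ] H₀)
    (hHcl : IsClosed ((Hsp : Set H₀)))
    (hT : ActsIn Hsp dom T) (hTcl : IsClosedOp dom T)
    (Hn domn : ℕ → Submodule ℂ H₀) (Tn : ℕ → H₀ →ₗ[ℂ] H₀)
    (hHncl : ∀ n, IsClosed ((Hn n : Set H₀)))
    (hTn : ∀ n, ActsIn (Hn n) (domn n) (Tn n))
    (hTncl : ∀ n, IsClosedOp (domn n) (Tn n))
    (P : H₀ →L[ℂ] H₀) (Pn : ℕ → H₀ →L[ℂ] H₀)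
    (hP : IsOrthProj Hsp P) (hPn : ∀ n, IsOrthProj (Hn n) (Pn n))
    (hPconv : ∀ y : H₀, Tendsto (fun n => Pn n y) atTop (nhds (P y)))
    (domS : Submodule ℂ H₀) (S : H₀ →ₗ[ℂ] H₀)
    (domSn : ℕ → Submodule ℂ H₀) (Sn : ℕ → H₀ →ₗ[ℂ] H₀)
    (hadjT : IsAdjointOp Hsp dom T domS S)
    (hadjn : ∀ n, IsAdjointOp (Hn n) (domn n) (Tn n) (domSn n) (Sn n))
    (hconv : GSRConv Hsp dom T Hn domn Tn)
    (hconvadj : GSRConv Hsp domS S Hn domSn Sn) :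
    {lam : ℂ | LimApproxSpectrum domn Tn lam}
      = {lam : ℂ | LimEssSpectrum domn Tn lam} ∪ {lam : ℂ | PointSpectrum dom T lam} :=
  stmt11_general Hsp dom T hHcl hT Hn domn Tn hTn P Pn hP hPn hPconv domS S domSn Sn hadjT hadjn
    hconv hconvadj
end
end
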